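/- arXiv:1303.0102 — 3 statements merged into one kernel-verified Lean document; each statement's English description precedes it below -/
import Mathlib

section
/- Let Ω ⊂ ℝ^d be a bounded measurable set of positive Lebesgue measure |Ω|, let N ≥ 1 and ε = N^{-1/d}. Let ψ_η : ℝ^d → ℝ be bounded and measurable, and let Φ : ℝ^d → ℝ be bounded, measurable and compactly supported. Suppose J and Q are functions on ℝ^d vanishing outside Ω that are piecewise constant with respect to a partition of Ω into N pairwise disjoint measurable sets S_1,…,S_N, each of measure |Ω|/N, with values J_j and Q_j on S_j, and suppose |J(y)| ≤ M for all y. Define the error E(x) = |Ω|^{-2} ∫∫ ψ_η(x−R) Φ(ρ) [ J(R+(ε/2)ρ)J(R−(ε/2)ρ) − Q(R+(ε/2)ρ)Q(R−(ε/2)ρ) ] dρ dR. Then for every x, |E(x)| ≤ (sup|ψ_η|)·(sup|Φ|)·( 2M‖𝐉−𝐐‖₁ + ‖𝐉−𝐐‖₁² ), where ‖𝐉−𝐐‖₁ = Σ_{j=1}^N |J_j − Q_j| is the vector 1-norm of the difference of the coefficient vectors. -/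
/-!
With `D = ‖J - Q‖`, the identity `ab - a'b' = a(b - b') + (a - a')b - (a - a')(b - b')` bounds the
integrand at `u, v = R ± (ε/2)ρ` by `sup|ψ| sup|Φ|` times
`M 1_Ω(u) D(v) + D(u) M 1_Ω(v) + D(u) D(v)`. For nonnegative `F, G` on `ℝ^d`,
`∫∫ F(R + cρ) G(R - cρ) dρ dR = |2c|^{-d} ∫F ∫G`, and `|ε|^{-d} = N`. As `∫D = ‖𝐉 - 𝐐‖₁ |Ω| / N`
and `∫ M 1_Ω = M |Ω|`, the three terms contribute `2M‖𝐉 - 𝐐‖₁|Ω|² + ‖𝐉 - 𝐐‖₁²|Ω|²/N`, and `N ≥ 1`.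
All estimates are made on lower Lebesgue integrals of norms, which dominate the Bochner integral
without any integrability.
-/

open MeasureTheory ENNReal Module Function

theorem rpow_neg_one_div_pow {x : ℝ} (hx : 0 ≤ x) {d : ℕ} (hd : d ≠ 0) :
    (x ^ (-(1 : ℝ) / d)) ^ d = x⁻¹ := by
  rw [← Real.rpow_natCast, ← Real.rpow_mul hx, div_mul_cancel₀ _ (by exact_mod_cast hd),
    Real.rpow_neg_one]

theorem natCast_mul_cross_terms_le {N : ℕ} (hN : 1 ≤ N) (a b V : ℝ≥0∞) :
    N * (2 * (a * V) * (b * (V / N)) + (b * (V / N)) ^ 2) ≤ (2 * a * b + b ^ 2) * V ^ 2 := by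
  have hNV : (N : ℝ≥0∞) * (V / N) = V :=
    ENNReal.mul_div_cancel (by positivity) (ENNReal.natCast_ne_top N)
  have hVN : V / N ≤ V := ENNReal.div_le_of_le_mul (le_mul_of_one_le_right' (by exact_mod_cast hN))
  calc N * (2 * (a * V) * (b * (V / N)) + (b * (V / N)) ^ 2)
      = 2 * a * b * V * (N * (V / N)) + b ^ 2 * (V / N) * (N * (V / N)) := by ring
    _ ≤ 2 * a * b * V * (N * (V / N)) + b ^ 2 * V * (N * (V / N)) := by gcongr
    _ = _ := by rw [hNV]; ring

theorem abs_inv_toReal_sq_mul_le_of_enorm_le {V : ℝ≥0∞} (hV : V ≠ ⊤) (hV0 : 0 < V.toReal)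
    {B I : ℝ} (hB : 0 ≤ B) (h : ‖I‖ₑ ≤ ENNReal.ofReal B * V ^ 2) :
    |(V.toReal ^ 2)⁻¹ * I| ≤ B := by
  have hI := ENNReal.toReal_mono (by finiteness) h
  rw [toReal_enorm, Real.norm_eq_abs, ENNReal.toReal_mul, ENNReal.toReal_ofReal hB,
    ENNReal.toReal_pow] at hI
  rw [abs_mul, abs_inv, abs_of_pos (by positivity), inv_mul_le_iff₀ (by positivity), mul_comm]
  exact hI

theorem enorm_le_indicator_of_abs_le {α : Type*} {Ω : Set α} {f : α → ℝ} {M : ℝ}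
    (hM : ∀ y, |f y| ≤ M) (hf0 : ∀ y ∉ Ω, f y = 0) (y : α) :
    ‖f y‖ₑ ≤ Ω.indicator (fun _ => ENNReal.ofReal M) y := by
  by_cases hy : y ∈ Ω
  · rw [Set.indicator_of_mem hy, Real.enorm_eq_ofReal_abs]
    exact ENNReal.ofReal_le_ofReal (hM y)
  · rw [hf0 y hy, enorm_zero]
    exact bot_le

theorem enorm_mul_sub_mul_le {R : Type*} [NonUnitalNormedRing R] [NormMulClass R] (a b a' b' : R) :
    ‖a * b - a' * b'‖ₑ ≤ ‖a‖ₑ * ‖b - b'‖ₑ + ‖a - a'‖ₑ * ‖b‖ₑ + ‖a - a'‖ₑ * ‖b - b'‖ₑ := by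
  have h : a * b - a' * b' = a * (b - b') + (a - a') * b - (a - a') * (b - b') := by
    noncomm_ring
  rw [h, ← enorm_mul, ← enorm_mul, ← enorm_mul]
  exact enorm_sub_le.trans (add_le_add_left (enorm_add_le _ _) _)

theorem enorm_eq_sum_indicator_of_eqOn_partition {α ι F : Type*} [Fintype ι]
    [NormedAddCommGroup F] {S : ι → Set α} (hS : Pairwise (Disjoint on S)) {f : α → F}
    {a : ι → F} (hf : ∀ j, ∀ y ∈ S j, f y = a j) (hf0 : ∀ y ∉ ⋃ j, S j, f y = 0) (y : α) :
    ‖f y‖ₑ = ∑ j, (S j).indicator (fun _ => ‖a j‖ₑ) y := by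
  by_cases hy : y ∈ ⋃ j, S j
  · obtain ⟨j, hj⟩ := Set.mem_iUnion.mp hy
    rw [Finset.sum_eq_single j, Set.indicator_of_mem hj, hf j y hj]
    · intro i _ hij
      exact Set.indicator_of_notMem (Set.disjoint_right.mp (hS hij) hj) _
    · exact fun h => absurd (Finset.mem_univ j) h
  · rw [hf0 y hy, enorm_zero]
    refine (Finset.sum_eq_zero fun j _ => Set.indicator_of_notMem ?_ _).symm
    exact fun hj => hy (Set.mem_iUnion_of_mem j hj)

theorem measurable_enorm_of_eqOn_partition {α ι F : Type*} [MeasurableSpace α] [Fintype ι]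
    [NormedAddCommGroup F] {S : ι → Set α} (hSm : ∀ j, MeasurableSet (S j))
    (hS : Pairwise (Disjoint on S)) {f : α → F} {a : ι → F} (hf : ∀ j, ∀ y ∈ S j, f y = a j)
    (hf0 : ∀ y ∉ ⋃ j, S j, f y = 0) :
    Measurable fun y => ‖f y‖ₑ := by
  simp_rw [enorm_eq_sum_indicator_of_eqOn_partition hS hf hf0]
  exact Finset.measurable_sum _ fun j _ => measurable_const.indicator (hSm j)

theorem lintegral_enorm_eq_sum_of_eqOn_partition {α ι F : Type*} [MeasurableSpace α] [Fintype ι]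
    [NormedAddCommGroup F] (μ : Measure α) {S : ι → Set α} (hSm : ∀ j, MeasurableSet (S j))
    (hS : Pairwise (Disjoint on S)) {f : α → F} {a : ι → F} (hf : ∀ j, ∀ y ∈ S j, f y = a j)
    (hf0 : ∀ y ∉ ⋃ j, S j, f y = 0) :
    ∫⁻ y, ‖f y‖ₑ ∂μ = ∑ j, ‖a j‖ₑ * μ (S j) := by
  rw [lintegral_congr (enorm_eq_sum_indicator_of_eqOn_partition hS hf hf0),
    lintegral_finsetSum _ fun j _ => measurable_const.indicator (hSm j)]
  simp only [lintegral_indicator_const (hSm _)]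

section HaarChangeOfVariables

variable {E : Type*} [NormedAddCommGroup E] [NormedSpace ℝ E] [MeasurableSpace E] [BorelSpace E]
  [FiniteDimensional ℝ E] (μ : Measure E) [μ.IsAddHaarMeasure]

theorem lintegral_comp_const_add_smul {F : E → ℝ≥0∞} (hF : Measurable F) (a : E) {c : ℝ}
    (hc : c ≠ 0) :
    ∫⁻ y, F (a + c • y) ∂μ = ENNReal.ofReal (|c| ^ finrank ℝ E)⁻¹ * ∫⁻ y, F y ∂μ := by
  have h := lintegral_map (μ := μ) (f := fun z => F (a + z)) (hF.comp (measurable_const_add a))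
    (measurable_const_smul c)
  rw [Measure.map_addHaar_smul μ hc, lintegral_smul_measure, lintegral_add_left_eq_self,
    abs_inv, abs_pow, smul_eq_mul] at h
  exact h.symm

theorem measurable_comp_add_smul_mul_comp_sub_smul {F G : E → ℝ≥0∞} (hF : Measurable F)
    (hG : Measurable G) (c : ℝ) :
    Measurable fun p : E × E => F (p.1 + c • p.2) * G (p.1 - c • p.2) :=
  (hF.comp (measurable_fst.add (measurable_snd.const_smul c))).mul
    (hG.comp (measurable_fst.sub (measurable_snd.const_smul c)))

theorem lintegral_lintegral_comp_add_smul_mul_comp_sub_smul {F G : E → ℝ≥0∞}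
    (hF : Measurable F) (hG : Measurable G) {c : ℝ} (hc : c ≠ 0) :
    ∫⁻ R, ∫⁻ ρ, F (R + c • ρ) * G (R - c • ρ) ∂μ ∂μ =
      ENNReal.ofReal (|2 * c| ^ finrank ℝ E)⁻¹ * ((∫⁻ y, F y ∂μ) * ∫⁻ y, G y ∂μ) := by
  -- translating `R` by `c • ρ` moves the whole dependence on `ρ` into the first factor
  have hshift : ∀ ρ, ∫⁻ R, F (R + c • ρ) * G (R - c • ρ) ∂μ =
      ∫⁻ R, F (R + (2 * c) • ρ) * G R ∂μ := by
    intro ρ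
    rw [← lintegral_add_right_eq_self _ (c • ρ)]
    congr with R
    rw [add_sub_cancel_right, add_assoc, ← add_smul, two_mul]
  calc ∫⁻ R, ∫⁻ ρ, F (R + c • ρ) * G (R - c • ρ) ∂μ ∂μ
      = ∫⁻ ρ, ∫⁻ R, F (R + c • ρ) * G (R - c • ρ) ∂μ ∂μ :=
        lintegral_lintegral_swap (measurable_comp_add_smul_mul_comp_sub_smul hF hG c).aemeasurable
    _ = ∫⁻ ρ, ∫⁻ R, F (R + (2 * c) • ρ) * G R ∂μ ∂μ := by simp_rw [hshift]
    _ = ∫⁻ R, ∫⁻ ρ, F (R + (2 * c) • ρ) * G R ∂μ ∂μ :=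
        lintegral_lintegral_swap ((hF.comp (measurable_snd.add
          (measurable_fst.const_smul _))).mul (hG.comp measurable_snd)).aemeasurable
    _ = ∫⁻ R, ENNReal.ofReal (|2 * c| ^ finrank ℝ E)⁻¹ * (∫⁻ y, F y ∂μ) * G R ∂μ := by
        congr with R
        rw [lintegral_mul_const (f := fun ρ => F (R + (2 * c) • ρ)) (G R)
            (hF.comp ((measurable_const_smul (2 * c)).const_add R)),
          lintegral_comp_const_add_smul μ hF R (mul_ne_zero two_ne_zero hc)]
    _ = _ := by rw [lintegral_const_mul _ hG]; ring

theorem lintegral_lintegral_le_of_le_cross_terms {f : E → E → ℝ≥0∞} {F D : E → ℝ≥0∞}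
    (hF : Measurable F) (hD : Measurable D) {c : ℝ} (hc : c ≠ 0) (K : ℝ≥0∞)
    (hf : ∀ R ρ, f R ρ ≤ K * (F (R + c • ρ) * D (R - c • ρ) + D (R + c • ρ) * F (R - c • ρ) +
      D (R + c • ρ) * D (R - c • ρ))) :
    ∫⁻ R, ∫⁻ ρ, f R ρ ∂μ ∂μ ≤ K * ENNReal.ofReal (|2 * c| ^ finrank ℝ E)⁻¹ *
      (2 * (∫⁻ y, F y ∂μ) * (∫⁻ y, D y ∂μ) + (∫⁻ y, D y ∂μ) ^ 2) := by
  set P : (E → ℝ≥0∞) → (E → ℝ≥0∞) → E → E → ℝ≥0∞ :=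
    fun F G R ρ => F (R + c • ρ) * G (R - c • ρ) with hPdef
  have hP {F G : E → ℝ≥0∞} (hF : Measurable F) (hG : Measurable G) :
      Measurable (uncurry (P F G)) :=
    measurable_comp_add_smul_mul_comp_sub_smul hF hG c
  have hPin {F G : E → ℝ≥0∞} (hF : Measurable F) (hG : Measurable G) (R : E) :
      Measurable (P F G R) :=
    (hP hF hG).comp measurable_prodMk_left
  have hPout {F G : E → ℝ≥0∞} (hF : Measurable F) (hG : Measurable G) :
      Measurable fun R => ∫⁻ ρ, P F G R ρ ∂μ :=
    (hP hF hG).lintegral_prod_right'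
  calc ∫⁻ R, ∫⁻ ρ, f R ρ ∂μ ∂μ
      ≤ ∫⁻ R, ∫⁻ ρ, K * (P F D R ρ + P D F R ρ + P D D R ρ) ∂μ ∂μ :=
        lintegral_mono fun R => lintegral_mono fun ρ => hf R ρ
    _ = ∫⁻ R, K * ((∫⁻ ρ, P F D R ρ ∂μ) + (∫⁻ ρ, P D F R ρ ∂μ) + ∫⁻ ρ, P D D R ρ ∂μ) ∂μ := by
        refine lintegral_congr fun R => ?_
        rw [lintegral_const_mul K (((hPin hF hD R).fun_add (hPin hD hF R)).fun_add (hPin hD hD R)),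
          lintegral_add_left ((hPin hF hD R).fun_add (hPin hD hF R)),
          lintegral_add_left (hPin hF hD R)]
    _ = K * ((∫⁻ R, ∫⁻ ρ, P F D R ρ ∂μ ∂μ) + (∫⁻ R, ∫⁻ ρ, P D F R ρ ∂μ ∂μ) +
          ∫⁻ R, ∫⁻ ρ, P D D R ρ ∂μ ∂μ) := by
        rw [lintegral_const_mul K (((hPout hF hD).fun_add (hPout hD hF)).fun_add (hPout hD hD)),
          lintegral_add_left ((hPout hF hD).fun_add (hPout hD hF)),
          lintegral_add_left (hPout hF hD)]
    _ = _ := by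
        simp only [hPdef, lintegral_lintegral_comp_add_smul_mul_comp_sub_smul μ hF hD hc,
          lintegral_lintegral_comp_add_smul_mul_comp_sub_smul μ hD hF hc,
          lintegral_lintegral_comp_add_smul_mul_comp_sub_smul μ hD hD hc]
        ring

theorem lintegral_lintegral_enorm_mul_sub_mul_le {𝕜 : Type*} [NonUnitalNormedRing 𝕜]
    [NormMulClass 𝕜] {w : E → E → 𝕜} {J Q : E → 𝕜} {F : E → ℝ≥0∞} (hF : Measurable F)
    (hD : Measurable fun y => ‖J y - Q y‖ₑ) (hJF : ∀ y, ‖J y‖ₑ ≤ F y) {K : ℝ≥0∞}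
    (hw : ∀ R ρ, ‖w R ρ‖ₑ ≤ K) {c : ℝ} (hc : c ≠ 0) :
    ∫⁻ R, ∫⁻ ρ, ‖w R ρ * (J (R + c • ρ) * J (R - c • ρ) - Q (R + c • ρ) * Q (R - c • ρ))‖ₑ
        ∂μ ∂μ ≤
      K * ENNReal.ofReal (|2 * c| ^ finrank ℝ E)⁻¹ *
        (2 * (∫⁻ y, F y ∂μ) * (∫⁻ y, ‖J y - Q y‖ₑ ∂μ) + (∫⁻ y, ‖J y - Q y‖ₑ ∂μ) ^ 2) := by
  refine lintegral_lintegral_le_of_le_cross_terms μ hF hD hc K fun R ρ => ?_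
  rw [enorm_mul]
  gcongr
  · exact hw R ρ
  · refine (enorm_mul_sub_mul_le _ _ _ _).trans ?_
    gcongr <;> exact hJF _

end HaarChangeOfVariables

theorem stmt_0_general (d N : ℕ) (hd : 0 < d) (hN : 1 ≤ N)
    (Ω : Set (Fin d → ℝ)) (hΩmeas : MeasurableSet Ω)
    (hΩbdd : Bornology.IsBounded Ω) (hΩpos : 0 < (volume Ω).toReal)
    (ε : ℝ) (hε : ε = (N : ℝ) ^ (-(1 : ℝ) / d))
    (ψη : (Fin d → ℝ) → ℝ)
    (Cψ : ℝ) (hCψ : ∀ x, |ψη x| ≤ Cψ)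
    (Φ : (Fin d → ℝ) → ℝ)
    (CΦ : ℝ) (hCΦ : ∀ ρ, |Φ ρ| ≤ CΦ)
    (S : Fin N → Set (Fin d → ℝ))
    (hSmeas : ∀ j, MeasurableSet (S j))
    (hSdisj : ∀ i j, i ≠ j → Disjoint (S i) (S j))
    (hSunion : (⋃ j, S j) = Ω)
    (hSvol : ∀ j, volume (S j) = volume Ω / N)
    (Jc Qc : Fin N → ℝ) (J Q : (Fin d → ℝ) → ℝ)
    (hJval : ∀ j, ∀ y ∈ S j, J y = Jc j)
    (hQval : ∀ j, ∀ y ∈ S j, Q y = Qc j)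
    (hJ0 : ∀ y ∉ Ω, J y = 0) (hQ0 : ∀ y ∉ Ω, Q y = 0)
    (M : ℝ) (hM : ∀ y, |J y| ≤ M) :
    ∀ x : Fin d → ℝ,
      |((volume Ω).toReal ^ 2)⁻¹ *
          ∫ R : Fin d → ℝ, ∫ ρ : Fin d → ℝ,
            ψη (x - R) * Φ ρ *
              (J (R + (ε / 2) • ρ) * J (R - (ε / 2) • ρ) -
                Q (R + (ε / 2) • ρ) * Q (R - (ε / 2) • ρ))| ≤
        Cψ * CΦ *
          (2 * M * (∑ j, |Jc j - Qc j|) + (∑ j, |Jc j - Qc j|) ^ 2) := by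
  intro x
  set s := ∑ j, |Jc j - Qc j|
  have hε0 : 0 < ε := by rw [hε]; positivity
  have hCψ0 : 0 ≤ Cψ := (abs_nonneg _).trans (hCψ 0)
  have hCΦ0 : 0 ≤ CΦ := (abs_nonneg _).trans (hCΦ 0)
  have hM0 : 0 ≤ M := (abs_nonneg _).trans (hM 0)
  have hs0 : 0 ≤ s := Finset.sum_nonneg fun j _ => abs_nonneg _
  have hscale : ENNReal.ofReal (|2 * (ε / 2)| ^ finrank ℝ (Fin d → ℝ))⁻¹ = N := by
    rw [finrank_fin_fun, mul_div_cancel₀ ε two_ne_zero, abs_of_pos hε0, hε,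
      rpow_neg_one_div_pow (Nat.cast_nonneg N) hd.ne', inv_inv, ENNReal.ofReal_natCast]
  have hDval : ∀ j, ∀ y ∈ S j, J y - Q y = Jc j - Qc j := fun j y hy => by
    rw [hJval j y hy, hQval j y hy]
  have hD0 : ∀ y ∉ ⋃ j, S j, J y - Q y = 0 := fun y hy => by
    rw [hSunion] at hy
    rw [hJ0 y hy, hQ0 y hy, sub_zero]
  have hDint : ∫⁻ y, ‖J y - Q y‖ₑ = ENNReal.ofReal s * (volume Ω / N) := by
    rw [lintegral_enorm_eq_sum_of_eqOn_partition volume hSmeas hSdisj hDval hD0]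
    simp_rw [hSvol, ← Finset.sum_mul, Real.enorm_eq_ofReal_abs]
    rw [ENNReal.ofReal_sum_of_nonneg fun j _ => abs_nonneg _]
  have hw : ∀ R ρ, ‖ψη (x - R) * Φ ρ‖ₑ ≤ ENNReal.ofReal Cψ * ENNReal.ofReal CΦ := fun R ρ => by
    rw [enorm_mul, Real.enorm_eq_ofReal_abs, Real.enorm_eq_ofReal_abs]
    gcongr <;> apply_assumption
  have hbound := lintegral_lintegral_enorm_mul_sub_mul_le volume
    (measurable_const.indicator hΩmeas) (measurable_enorm_of_eqOn_partition hSmeas hSdisj hDval hD0)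
    (enorm_le_indicator_of_abs_le hM hJ0) hw (div_ne_zero hε0.ne' two_ne_zero)
  rw [hscale, lintegral_indicator_const hΩmeas, hDint, mul_assoc] at hbound
  refine abs_inv_toReal_sq_mul_le_of_enorm_le hΩbdd.measure_lt_top.ne hΩpos (by positivity) ?_
  calc _ ≤ _ := ((enorm_integral_le_lintegral_enorm _).trans
          (lintegral_mono fun R => enorm_integral_le_lintegral_enorm _)).trans hbound
    _ ≤ ENNReal.ofReal Cψ * ENNReal.ofReal CΦ *
          ((2 * ENNReal.ofReal M * ENNReal.ofReal s + ENNReal.ofReal s ^ 2) * volume Ω ^ 2) := by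
        gcongr _ * ?_
        exact natCast_mul_cross_terms_le hN _ _ _
    _ = _ := by
        rw [ENNReal.ofReal_mul (by positivity), ENNReal.ofReal_mul hCψ0,
          ENNReal.ofReal_add (by positivity) (by positivity), ENNReal.ofReal_mul (by positivity),
          ENNReal.ofReal_mul zero_le_two, ENNReal.ofReal_pow hs0, ENNReal.ofReal_ofNat]
        ring

/-- Main interaction-stress error bound (Section 7.2 of the paper): with
`ε = N^{-1/d}`, a bounded window `ψ_η`, a bounded compactly supported weight `Φ`,
and `J`, `Q` piecewise constant (with values `J_j`, `Q_j`) on a partition of `Ω`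
into `N` measurable sets of measure `|Ω|/N`, vanishing outside `Ω` and with
`|J| ≤ M`, the error
`E(x) = |Ω|⁻² ∫∫ ψ_η(x−R) Φ(ρ) [J⁺J⁻ − Q⁺Q⁻] dρ dR` satisfies
`|E(x)| ≤ (sup|ψ_η|)(sup|Φ|)(2M‖𝐉−𝐐‖₁ + ‖𝐉−𝐐‖₁²)`, where
`‖𝐉−𝐐‖₁ = Σ_j |J_j − Q_j|`. -/
theorem stmt_0 (d N : ℕ) (hd : 0 < d) (hN : 1 ≤ N)
    (Ω : Set (Fin d → ℝ)) (hΩmeas : MeasurableSet Ω)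
    (hΩbdd : Bornology.IsBounded Ω) (hΩpos : 0 < (volume Ω).toReal)
    (ε : ℝ) (hε : ε = (N : ℝ) ^ (-(1 : ℝ) / d))
    (ψη : (Fin d → ℝ) → ℝ) (hψmeas : Measurable ψη)
    (Cψ : ℝ) (hCψ : ∀ x, |ψη x| ≤ Cψ)
    (Φ : (Fin d → ℝ) → ℝ) (hΦmeas : Measurable Φ) (hΦsupp : HasCompactSupport Φ)
    (CΦ : ℝ) (hCΦ : ∀ ρ, |Φ ρ| ≤ CΦ)
    (S : Fin N → Set (Fin d → ℝ))
    (hSmeas : ∀ j, MeasurableSet (S j))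
    (hSdisj : ∀ i j, i ≠ j → Disjoint (S i) (S j))
    (hSunion : (⋃ j, S j) = Ω)
    (hSvol : ∀ j, volume (S j) = volume Ω / N)
    (Jc Qc : Fin N → ℝ) (J Q : (Fin d → ℝ) → ℝ)
    (hJval : ∀ j, ∀ y ∈ S j, J y = Jc j)
    (hQval : ∀ j, ∀ y ∈ S j, Q y = Qc j)
    (hJ0 : ∀ y ∉ Ω, J y = 0) (hQ0 : ∀ y ∉ Ω, Q y = 0)
    (M : ℝ) (hM : ∀ y, |J y| ≤ M) :
    ∀ x : Fin d → ℝ,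
      |((volume Ω).toReal ^ 2)⁻¹ *
          ∫ R : Fin d → ℝ, ∫ ρ : Fin d → ℝ,
            ψη (x - R) * Φ ρ *
              (J (R + (ε / 2) • ρ) * J (R - (ε / 2) • ρ) -
                Q (R + (ε / 2) • ρ) * Q (R - (ε / 2) • ρ))| ≤
        Cψ * CΦ *
          (2 * M * (∑ j, |Jc j - Qc j|) + (∑ j, |Jc j - Qc j|) ^ 2) :=
  stmt_0_general d N hd hN Ω hΩmeas hΩbdd hΩpos ε hε ψη Cψ hCψ Φ CΦ hCΦ S hSmeas hSdisj hSunion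
    hSvol Jc Qc J Q hJval hQval hJ0 hQ0 M hM
end

section
/- Let A be a real B×N matrix of rank r with singular values σ₁ ≥ … ≥ σ_r in (0,1] and orthonormal singular vectors ξ_j ∈ ℝ^B, ξ̂_j ∈ ℝ^N. Let f : [0,∞) → (0,1] be continuous, strictly decreasing, with f(0)=1, f(j)=σ_j, f(t)→0. Let φ : (0,1]×(0,∞) → ℝ with s ↦ |1−φ(s,α)| and s ↦ |φ(s,α)|/s both nonincreasing on (0,1] for the given α > 0, and let p ∈ [1,∞). Let b = Σ_j b_j ξ_j, b^δ = Σ_j b_j^δ ξ_j, x = Σ_j (b_j/σ_j) ξ̂_j, x^{α,δ} = Σ_j b_j^δ (φ(σ_j,α)/σ_j) ξ̂_j. Then there is a constant C₁ depending only on p and the singular vectors such that ‖x − x^{α,δ}‖_p ≤ C₁ ‖x‖_∞ ( ∫_0^{r+1} |1−φ(f(t),α)|^p dt )^{1/p} + C₁ ‖b − b^δ‖_∞ ( ∫_0^{r+1} (|φ(f(t),α)|/f(t))^p dt )^{1/p}. -/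
/-!
Expand the error `x - x^{α,δ}` in the orthonormal family `ξ̂`: its `j`-th coefficient is
`(b_j / σ_j) (1 - φ(σ_j)) + (b_j - b^δ_j) φ(σ_j) / σ_j`. Pairing with `ξ̂_j` (resp. `ξ_j`)
bounds `|b_j / σ_j|` by `‖x‖_∞` and `|b_j - b^δ_j|` by `‖b - b^δ‖_∞`, up to the `ℓ¹`-norms
of the singular vectors. For `g` either filter function, `t ↦ g (f t)` is nondecreasing
because `f` is decreasing, so `g (σ_j) = g (f (j + 1))` is bounded by its `L^p`-norm over
`[j + 1, j + 2] ⊆ [0, r + 1]`. Finally `‖·‖_p ≤ N^{1/p} ‖·‖_∞` on `ℝ^N`.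
-/

open Matrix

section Orthonormal

variable {ι n : Type*} [Fintype ι] [Fintype n]

theorem abs_dotProduct_le_iSup_mul (u w : n → ℝ) :
    |u ⬝ᵥ w| ≤ (⨆ i, |u i|) * ∑ i, |w i| := by
  have hu : ∀ i, |u i| ≤ ⨆ i, |u i| := le_ciSup (Set.finite_range _).bddAbove
  calc |u ⬝ᵥ w| ≤ ∑ i, |u i| * |w i| := by
        simpa only [dotProduct, abs_mul] using Finset.abs_sum_le_sum_abs (fun i => u i * w i) _
    _ ≤ ∑ i, (⨆ i, |u i|) * |w i| := by gcongr with i; exact hu i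
    _ = (⨆ i, |u i|) * ∑ i, |w i| := (Finset.mul_sum _ _ _).symm

theorem sum_smul_dotProduct_of_orthonormal [DecidableEq ι] {v : ι → n → ℝ}
    (hv : ∀ i j, v i ⬝ᵥ v j = if i = j then 1 else 0) (c : ι → ℝ) (j : ι) :
    (∑ k, c k • v k) ⬝ᵥ v j = c j := by
  simp [sum_dotProduct, smul_dotProduct, hv]

theorem abs_coeff_le_iSup_mul_of_orthonormal [DecidableEq ι] {v : ι → n → ℝ}
    (hv : ∀ i j, v i ⬝ᵥ v j = if i = j then 1 else 0) (c : ι → ℝ) (j : ι) :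
    |c j| ≤ (⨆ i, |(∑ k, c k • v k) i|) * ∑ k, ∑ i, |v k i| := by
  rw [← sum_smul_dotProduct_of_orthonormal hv c j]
  refine (abs_dotProduct_le_iSup_mul _ _).trans ?_
  gcongr
  · exact Real.iSup_nonneg fun i => abs_nonneg _
  · exact Finset.single_le_sum (f := fun k => ∑ i, |v k i|)
      (fun k _ => Finset.sum_nonneg fun i _ => abs_nonneg _) (Finset.mem_univ j)

theorem abs_sum_smul_apply_le {c : ι → ℝ} {M : ℝ} (hc : ∀ k, |c k| ≤ M)
    (v : ι → n → ℝ) (i : n) :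
    |(∑ k, c k • v k) i| ≤ M * ∑ k, ∑ i, |v k i| := by
  calc |(∑ k, c k • v k) i| ≤ ∑ k, |c k| * |v k i| := by
        simpa only [Finset.sum_apply, Pi.smul_apply, smul_eq_mul, abs_mul]
          using Finset.abs_sum_le_sum_abs (fun k => c k * v k i) _
    _ ≤ ∑ k, |c k| * ∑ i, |v k i| := by
        gcongr with k
        exact Finset.single_le_sum (f := fun i => |v k i|) (fun _ _ => abs_nonneg _)
          (Finset.mem_univ i)
    _ ≤ ∑ k, M * ∑ i, |v k i| := Finset.sum_le_sum fun k _ =>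
        mul_le_mul_of_nonneg_right (hc k) (Finset.sum_nonneg fun i _ => abs_nonneg _)
    _ = M * ∑ k, ∑ i, |v k i| := (Finset.mul_sum _ _ _).symm

end Orthonormal

theorem rpow_sum_abs_rpow_le {n : Type*} [Fintype n] {v : n → ℝ} {M p : ℝ} (hp : 0 < p)
    (hM : 0 ≤ M) (hv : ∀ i, |v i| ≤ M) :
    (∑ i, |v i| ^ p) ^ (1 / p) ≤ (Fintype.card n : ℝ) ^ (1 / p) * M := by
  calc (∑ i, |v i| ^ p) ^ (1 / p) ≤ (∑ _i : n, M ^ p) ^ (1 / p) := by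
        gcongr with i
        exact hv i
    _ = (Fintype.card n : ℝ) ^ (1 / p) * M := by
        rw [Finset.sum_const, Finset.card_univ, nsmul_eq_mul,
          Real.mul_rpow (Nat.cast_nonneg _) (Real.rpow_nonneg hM p),
          one_div, Real.rpow_rpow_inv hM hp.ne']

theorem le_integral_of_monotoneOn {G : ℝ → ℝ} {s a R : ℝ} (hG : MonotoneOn G (Set.Icc s R))
    (hG0 : ∀ t ∈ Set.Icc s R, 0 ≤ G t) (hsa : s ≤ a) (haR : a + 1 ≤ R) :
    G a ≤ ∫ t in s..R, G t := by
  have hsR : s ≤ R := by linarith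
  have hint : IntervalIntegrable G MeasureTheory.volume s R :=
    (hG.mono (Set.uIcc_of_le hsR).le).intervalIntegrable
  calc G a = ∫ _ in a..a + 1, G a := by simp
    _ ≤ ∫ t in a..a + 1, G t := by
        refine intervalIntegral.integral_mono_on (by linarith) intervalIntegrable_const
          (hint.mono_set ?_) fun t ht => hG ⟨hsa, by linarith⟩ ⟨?_, ?_⟩ ht.1
        · rw [Set.uIcc_of_le (by linarith), Set.uIcc_of_le hsR]
          exact Set.Icc_subset_Icc hsa haR
        · linarith [ht.1]
        · linarith [ht.2]
    _ ≤ ∫ t in s..R, G t :=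
        intervalIntegral.integral_mono_interval hsa (by linarith) haR
          ((MeasureTheory.ae_restrict_mem measurableSet_Ioc).mono fun t ht =>
            hG0 t (Set.Ioc_subset_Icc_self ht)) hint

/-- `g ∘ f` is nondecreasing, so its value at `a` is at most its mean over `[a, a + 1]`. -/
theorem le_rpow_integral_of_antitoneOn {f g : ℝ → ℝ} {S : Set ℝ} {s a R p : ℝ} (hp : 0 < p)
    (hf : AntitoneOn f (Set.Ici s)) (hfS : ∀ t, s ≤ t → f t ∈ S) (hg : AntitoneOn g S)
    (hg0 : ∀ y ∈ S, 0 ≤ g y) (hsa : s ≤ a) (haR : a + 1 ≤ R) :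
    g (f a) ≤ (∫ t in s..R, g (f t) ^ p) ^ (1 / p) := by
  have hmono : MonotoneOn (fun t => g (f t) ^ p) (Set.Icc s R) := fun x hx y hy hxy =>
    Real.rpow_le_rpow (hg0 _ (hfS x hx.1))
      (hg (hfS y hy.1) (hfS x hx.1) (hf hx.1 hy.1 hxy)) hp.le
  have hint := le_integral_of_monotoneOn hmono
    (fun t ht => Real.rpow_nonneg (hg0 _ (hfS t ht.1)) p) hsa haR
  calc g (f a) = (g (f a) ^ p) ^ (1 / p) := by
        rw [one_div, Real.rpow_rpow_inv (hg0 _ (hfS a hsa)) hp.ne']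
    _ ≤ _ := Real.rpow_le_rpow (Real.rpow_nonneg (hg0 _ (hfS a hsa)) p) hint (by positivity)

theorem le_rpow_integral_of_antitoneOn_of_fin {f g : ℝ → ℝ} {S : Set ℝ} {p : ℝ} {r : ℕ}
    (hp : 0 < p) (hf : AntitoneOn f (Set.Ici 0)) (hfS : ∀ t, 0 ≤ t → f t ∈ S)
    (hg : AntitoneOn g S) (hg0 : ∀ y ∈ S, 0 ≤ g y) (j : Fin r) :
    g (f ((j : ℕ) + 1)) ≤ (∫ t in (0 : ℝ)..(r + 1), g (f t) ^ p) ^ (1 / p) := by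
  have hj : ((j : ℕ) : ℝ) + 1 ≤ r := by exact_mod_cast j.is_lt
  exact le_rpow_integral_of_antitoneOn hp hf hfS hg hg0 (by positivity) (by linarith)

theorem rpow_integral_comp_nonneg {f g : ℝ → ℝ} {S : Set ℝ} {R p : ℝ} (hR : 0 ≤ R)
    (hfS : ∀ t, 0 ≤ t → f t ∈ S) (hg0 : ∀ y ∈ S, 0 ≤ g y) :
    0 ≤ (∫ t in (0 : ℝ)..R, g (f t) ^ p) ^ (1 / p) :=
  Real.rpow_nonneg (intervalIntegral.integral_nonneg hR fun t ht =>
    Real.rpow_nonneg (hg0 _ (hfS t ht.1)) p) _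

theorem abs_div_sub_mul_div_le {b bδ φ σ : ℝ} (hσ : 0 < σ) :
    |b / σ - bδ * φ / σ| ≤ |b / σ| * |1 - φ| + |b - bδ| * (|φ| / σ) := by
  have hsplit : b / σ - bδ * φ / σ = b / σ * (1 - φ) + (b - bδ) * (φ / σ) := by ring
  calc |b / σ - bδ * φ / σ| ≤ |b / σ * (1 - φ)| + |(b - bδ) * (φ / σ)| :=
        hsplit ▸ abs_add_le _ _
    _ = |b / σ| * |1 - φ| + |b - bδ| * (|φ| / σ) := by
        rw [abs_mul, abs_mul, abs_div φ σ, abs_of_pos hσ]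

theorem stmt_13_general {B N r : ℕ}
    (σ : Fin r → ℝ) (hσ : ∀ j, σ j ∈ Set.Ioc (0 : ℝ) 1)
    (ξ : Fin r → Fin B → ℝ) (ξhat : Fin r → Fin N → ℝ)
    (hξ : ∀ i j, ξ i ⬝ᵥ ξ j = if i = j then 1 else 0)
    (hξhat : ∀ i j, ξhat i ⬝ᵥ ξhat j = if i = j then 1 else 0)
    (p : ℝ) (hp : 1 ≤ p) :
    ∃ C₁ : ℝ, ∀ f : ℝ → ℝ,
      ContinuousOn f (Set.Ici 0) → StrictAntiOn f (Set.Ici 0) →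
      (∀ t : ℝ, 0 ≤ t → f t ∈ Set.Ioc (0 : ℝ) 1) → f 0 = 1 →
      (∀ j : Fin r, f ((j : ℕ) + 1) = σ j) →
      Filter.Tendsto f Filter.atTop (nhds 0) →
      ∀ (φ : ℝ → ℝ → ℝ) (α : ℝ), 0 < α →
      AntitoneOn (fun s => |1 - φ s α|) (Set.Ioc (0 : ℝ) 1) →
      AntitoneOn (fun s => |φ s α| / s) (Set.Ioc (0 : ℝ) 1) →
      ∀ bc bδ : Fin r → ℝ,
      (∑ i, |(∑ j, (bc j / σ j) • ξhat j) i -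
          (∑ j, (bδ j * φ (σ j) α / σ j) • ξhat j) i| ^ p) ^ (1 / p) ≤
        C₁ * (⨆ i, |(∑ j, (bc j / σ j) • ξhat j) i|) *
            (∫ t in (0 : ℝ)..(r + 1), |1 - φ (f t) α| ^ p) ^ (1 / p) +
          C₁ * (⨆ i, |(∑ j, (bc j - bδ j) • ξ j) i|) *
            (∫ t in (0 : ℝ)..(r + 1), (|φ (f t) α| / f t) ^ p) ^ (1 / p) := by
  have hp0 : 0 < p := one_pos.trans_le hp
  set K := ∑ k, ∑ i, |ξ k i|
  set Khat := ∑ k, ∑ i, |ξhat k i|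
  refine ⟨(N : ℝ) ^ (1 / p) * Khat * (Khat + K), ?_⟩
  intro f _ hf hfmem _ hfσ _ φ α _ hφ₁ hφ₂ bc bδ
  set X := ⨆ i, |(∑ j, (bc j / σ j) • ξhat j) i|
  set D := ⨆ i, |(∑ j, (bc j - bδ j) • ξ j) i|
  set J₁ := (∫ t in (0 : ℝ)..(r + 1), |1 - φ (f t) α| ^ p) ^ (1 / p)
  set J₂ := (∫ t in (0 : ℝ)..(r + 1), (|φ (f t) α| / f t) ^ p) ^ (1 / p)
  have hbias : ∀ j, |1 - φ (σ j) α| ≤ J₁ := fun j => hfσ j ▸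
    le_rpow_integral_of_antitoneOn_of_fin hp0 hf.antitoneOn hfmem hφ₁
      (fun _ _ => abs_nonneg _) j
  have hnoise : ∀ j, |φ (σ j) α| / σ j ≤ J₂ := fun j => hfσ j ▸
    le_rpow_integral_of_antitoneOn_of_fin hp0 hf.antitoneOn hfmem hφ₂
      (fun _ hy => div_nonneg (abs_nonneg _) hy.1.le) j
  have hX : 0 ≤ X := Real.iSup_nonneg fun _ => abs_nonneg _
  have hD : 0 ≤ D := Real.iSup_nonneg fun _ => abs_nonneg _
  have hK : 0 ≤ K := Finset.sum_nonneg fun _ _ => Finset.sum_nonneg fun _ _ => abs_nonneg _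
  have hKhat : 0 ≤ Khat :=
    Finset.sum_nonneg fun _ _ => Finset.sum_nonneg fun _ _ => abs_nonneg _
  have hJ₁ : 0 ≤ J₁ :=
    rpow_integral_comp_nonneg (g := fun s => |1 - φ s α|) (by positivity) hfmem
      fun _ _ => abs_nonneg _
  have hJ₂ : 0 ≤ J₂ :=
    rpow_integral_comp_nonneg (g := fun s => |φ s α| / s) (by positivity) hfmem
      fun _ hy => div_nonneg (abs_nonneg _) hy.1.le
  have hcoeff : ∀ j, |bc j / σ j - bδ j * φ (σ j) α / σ j| ≤ X * Khat * J₁ + D * K * J₂ :=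
    fun j => (abs_div_sub_mul_div_le (hσ j).1).trans <| add_le_add
      (mul_le_mul (abs_coeff_le_iSup_mul_of_orthonormal hξhat (fun j => bc j / σ j) j)
        (hbias j) (abs_nonneg _) (mul_nonneg hX hKhat))
      (mul_le_mul (abs_coeff_le_iSup_mul_of_orthonormal hξ (fun j => bc j - bδ j) j) (hnoise j)
        (div_nonneg (abs_nonneg _) (hσ j).1.le) (mul_nonneg hD hK))
  have herror : ∀ i,
      (∑ j, (bc j / σ j) • ξhat j) i - (∑ j, (bδ j * φ (σ j) α / σ j) • ξhat j) i =
        (∑ j, (bc j / σ j - bδ j * φ (σ j) α / σ j) • ξhat j) i := fun i => by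
    simp only [sub_smul, Finset.sum_sub_distrib, Pi.sub_apply]
  simp only [herror]
  refine (rpow_sum_abs_rpow_le hp0 ?_ (abs_sum_smul_apply_le hcoeff ξhat)).trans ?_
  · exact mul_nonneg (add_nonneg (mul_nonneg (mul_nonneg hX hKhat) hJ₁)
      (mul_nonneg (mul_nonneg hD hK) hJ₂)) hKhat
  have hN : 0 ≤ (N : ℝ) ^ (1 / p) := by positivity
  have hslack := mul_nonneg (mul_nonneg hN hKhat)
    (add_nonneg (mul_nonneg (mul_nonneg hK hX) hJ₁) (mul_nonneg (mul_nonneg hKhat hD) hJ₂))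
  rw [Fintype.card_fin]
  linarith

/-- Combined error estimate for filtered regularization: there is a constant `C₁`
depending only on `p` and the singular vectors such that, for every admissible
interpolant `f` of the singular values, every filter `φ` with `|1−φ(·,α)|` and
`|φ(·,α)|/·` nonincreasing, and all data `b`, `b^δ`,
`‖x − x^{α,δ}‖_p ≤ C₁‖x‖_∞ (∫_0^{r+1}|1−φ(f(t),α)|^p dt)^{1/p}
 + C₁‖b − b^δ‖_∞ (∫_0^{r+1}(|φ(f(t),α)|/f(t))^p dt)^{1/p}`. -/
theorem stmt_13 {B N r : ℕ} (A : Matrix (Fin B) (Fin N) ℝ) (hrank : A.rank = r)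
    (σ : Fin r → ℝ) (hσ : ∀ j, σ j ∈ Set.Ioc (0 : ℝ) 1)
    (hσord : ∀ i j : Fin r, i ≤ j → σ j ≤ σ i)
    (ξ : Fin r → Fin B → ℝ) (ξhat : Fin r → Fin N → ℝ)
    (hξ : ∀ i j, ξ i ⬝ᵥ ξ j = if i = j then 1 else 0)
    (hξhat : ∀ i j, ξhat i ⬝ᵥ ξhat j = if i = j then 1 else 0)
    (hA : ∀ j, A.mulVec (ξhat j) = σ j • ξ j)
    (hAT : ∀ j, A.transpose.mulVec (ξ j) = σ j • ξhat j)
    (p : ℝ) (hp : 1 ≤ p) :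
    ∃ C₁ : ℝ, ∀ f : ℝ → ℝ,
      ContinuousOn f (Set.Ici 0) → StrictAntiOn f (Set.Ici 0) →
      (∀ t : ℝ, 0 ≤ t → f t ∈ Set.Ioc (0 : ℝ) 1) → f 0 = 1 →
      (∀ j : Fin r, f ((j : ℕ) + 1) = σ j) →
      Filter.Tendsto f Filter.atTop (nhds 0) →
      ∀ (φ : ℝ → ℝ → ℝ) (α : ℝ), 0 < α →
      AntitoneOn (fun s => |1 - φ s α|) (Set.Ioc (0 : ℝ) 1) →
      AntitoneOn (fun s => |φ s α| / s) (Set.Ioc (0 : ℝ) 1) →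
      ∀ bc bδ : Fin r → ℝ,
      (∑ i, |(∑ j, (bc j / σ j) • ξhat j) i -
          (∑ j, (bδ j * φ (σ j) α / σ j) • ξhat j) i| ^ p) ^ (1 / p) ≤
        C₁ * (⨆ i, |(∑ j, (bc j / σ j) • ξhat j) i|) *
            (∫ t in (0 : ℝ)..(r + 1), |1 - φ (f t) α| ^ p) ^ (1 / p) +
          C₁ * (⨆ i, |(∑ j, (bc j - bδ j) • ξ j) i|) *
            (∫ t in (0 : ℝ)..(r + 1), (|φ (f t) α| / f t) ^ p) ^ (1 / p) :=
  stmt_13_general σ hσ ξ ξhat hξ hξhat p hp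
end

section
/- Let ψ : ℝ → ℝ be continuously differentiable, let q₁,…,q_N ∈ ℝ, and let (f_{ij})_{1≤i,j≤N} be real numbers with f_{ij} = −f_{ji} (so f_{ii}=0). Define T(x) = Σ_{1≤i<j≤N} f_{ij} (q_j − q_i) ∫_0^1 ψ( s(x − q_j) + (1−s)(x − q_i) ) ds. Then T is differentiable and T′(x) = Σ_{i=1}^N ( Σ_{j≠i} f_{ij} ) ψ(x − q_i) for all x ∈ ℝ. -/
/-!
The substitution `t = s (x - q j) + (1 - s) (x - q i)` turns each bond term into
`f i j * ∫ t in (x - q j)..(x - q i), ψ t`, whose derivative by the fundamental theorem of calculus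
is `f i j * (ψ (x - q i) - ψ (x - q j))`. Summing over `i < j` and moving the second halves to the
pairs `j > i` by antisymmetry gives `Σ_i (Σ_{j ≠ i} f i j) ψ (x - q i)`.
-/

open Finset

theorem intervalIntegral.sub_smul_integral_comp_segment {E : Type*} [NormedAddCommGroup E]
    [NormedSpace ℝ E] (φ : ℝ → E) (u v : ℝ) :
    (u - v) • ∫ s in (0 : ℝ)..1, φ (s * v + (1 - s) * u) = ∫ t in v..u, φ t := by
  rcases eq_or_ne u v with rfl | huv
  · simp
  have hline : ∀ s : ℝ, s * v + (1 - s) * u = (v - u) * s + u := fun s => by ring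
  simp only [hline]
  rw [intervalIntegral.integral_comp_mul_add φ (sub_ne_zero.mpr huv.symm), smul_smul,
    mul_zero, mul_one, zero_add, sub_add_cancel, intervalIntegral.integral_symm, smul_neg,
    ← neg_smul, ← mul_neg, neg_inv, neg_sub, mul_inv_cancel₀ (sub_ne_zero.mpr huv), one_smul]

theorem hasDerivAt_sub_mul_integral_comp_segment {ψ : ℝ → ℝ} (hψ : Continuous ψ) (a b x : ℝ) :
    HasDerivAt (fun y => (b - a) * ∫ s in (0 : ℝ)..1, ψ (s * (y - b) + (1 - s) * (y - a)))
      (ψ (x - a) - ψ (x - b)) x := by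
  have hprim : ∀ c, HasDerivAt (fun y => ∫ t in (0 : ℝ)..(y - c), ψ t) (ψ (x - c)) x := fun c => by
    simpa using (hψ.integral_hasStrictDerivAt 0 (x - c)).hasDerivAt.comp_sub_const x c
  have hsubst : (fun y => (b - a) * ∫ s in (0 : ℝ)..1, ψ (s * (y - b) + (1 - s) * (y - a))) =
      fun y => (∫ t in (0 : ℝ)..(y - a), ψ t) - ∫ t in (0 : ℝ)..(y - b), ψ t := by
    funext y
    rw [intervalIntegral.integral_interval_sub_left (hψ.intervalIntegrable _ _)
      (hψ.intervalIntegrable _ _),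
      ← intervalIntegral.sub_smul_integral_comp_segment ψ (y - a) (y - b), smul_eq_mul,
      sub_sub_sub_cancel_left]
  rw [hsubst]
  exact (hprim a).sub (hprim b)

theorem sum_sum_ite_lt_mul_sub_of_antisymm {ι : Type*} [Fintype ι] [LinearOrder ι]
    {f : ι → ι → ℝ} (hf : ∀ i j, f i j = -f j i) (g : ι → ℝ) :
    ∑ i, ∑ j, (if i < j then f i j * (g i - g j) else 0) =
      ∑ i, (∑ j ∈ univ.erase i, f i j) * g i :=
  calc ∑ i, ∑ j, (if i < j then f i j * (g i - g j) else 0)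
      = ∑ i, ∑ j, ((if i < j then f i j * g i else 0) + if i < j then f j i * g j else 0) := by
        refine sum_congr rfl fun i _ => sum_congr rfl fun j _ => ?_
        split_ifs
        · rw [hf j i]; ring
        · simp
    _ = ∑ i, ∑ j, ((if i < j then f i j * g i else 0) + if j < i then f i j * g i else 0) := by
        simp only [sum_add_distrib]
        rw [sum_comm (f := fun i j => if i < j then f j i * g j else 0)]
    _ = ∑ i, ∑ j, (if j ≠ i then f i j * g i else 0) := by
        refine sum_congr rfl fun i _ => sum_congr rfl fun j _ => ?_
        rcases lt_trichotomy i j with h | rfl | h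
        · simp [h, h.ne', not_lt_of_gt h]
        · simp
        · simp [h, h.ne, not_lt_of_gt h]
    _ = ∑ i, (∑ j ∈ univ.erase i, f i j) * g i := by
        simp only [← sum_filter, filter_ne', sum_mul]

/-- One-dimensional Hardy–Murdoch interaction stress identity: for antisymmetric
interaction forces `f i j = −f j i` and `T(x) = Σ_{i<j} f i j (q j − q i)
∫_0^1 ψ(s(x − q j) + (1−s)(x − q i)) ds`, the function `T` is differentiable with
`T'(x) = Σ_i (Σ_{j≠i} f i j) ψ(x − q i)`. -/
theorem stmt_17 (N : ℕ) (ψ : ℝ → ℝ) (hψ : ContDiff ℝ 1 ψ)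
    (q : Fin N → ℝ) (f : Fin N → Fin N → ℝ)
    (hf : ∀ i j, f i j = -f j i) :
    ∀ x : ℝ,
      HasDerivAt
        (fun x : ℝ => ∑ i, ∑ j,
          if i < j then
            f i j * (q j - q i) *
              ∫ s in (0 : ℝ)..1, ψ (s * (x - q j) + (1 - s) * (x - q i))
          else 0)
        (∑ i, (∑ j ∈ Finset.univ.erase i, f i j) * ψ (x - q i)) x := by
  intro x
  rw [← sum_sum_ite_lt_mul_sub_of_antisymm hf fun i => ψ (x - q i)]
  refine HasDerivAt.fun_sum fun i _ => HasDerivAt.fun_sum fun j _ => ?_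
  split_ifs
  · simpa only [mul_assoc] using
      (hasDerivAt_sub_mul_integral_comp_segment hψ.continuous (q i) (q j) x).const_mul (f i j)
  · exact hasDerivAt_const x 0
end
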